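/- Let x, y ∈ {0,1}^ℕ with the shift metric, and suppose there is a sequence of disjoint integer intervals [c_l, c_l + m_l) with m_l → ∞, c_l/(c_l + m_l) → 0, such that x_j = y_j for all j in [c_l, c_l + m_l + M) for every fixed M and large l (i.e., x and y agree on longer and longer blocks whose length dominates their starting position). Then Φ*_{(σ,x,y)}(δ) = 1 for every δ > 0. -/

import Mathlib

open Filter

noncomputable def Phi {α : Type*} (d : α → α → ℝ) (f : α → α) (x y : α) (δ : ℝ) : ℝ :=
  liminf (fun n : ℕ =>
    (((Finset.range (n+1)).filter (fun k => d (f^[k] x) (f^[k] y) < δ)).card : ℝ) / n) atTop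

noncomputable def PhiStar {α : Type*} (d : α → α → ℝ) (f : α → α) (x y : α) (δ : ℝ) : ℝ :=
  limsup (fun n : ℕ =>
    (((Finset.range (n+1)).filter (fun k => d (f^[k] x) (f^[k] y) < δ)).card : ℝ) / n) atTop

open Classical in
noncomputable def shiftDist (x y : ℕ → Bool) : ℝ :=
  if x = y then 0 else (2:ℝ)⁻¹ ^ (sInf {j | x j ≠ y j})

def shift (x : ℕ → Bool) : ℕ → Bool := fun n => x (n+1)

noncomputable def diamX (X : Type*) [MetricSpace X] : ℝ := Metric.diam (Set.univ : Set X)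

/-!
The orbits of `x` and `y` stay `δ`-close along each block `[c l, c l + m l)` once the agreement
extends `M` places past it, where `2⁻¹ ^ M < δ`. So at time `n = c l + m l` the proportion of
close times is at least `m l / (c l + m l) = 1 - c l / (c l + m l) → 1`, while it never exceeds
`(n + 1) / n → 1`.
-/

open Finset Topology

/-- Counts `k ∈ [0, n]` but divides by `n` (giving `0` at `n = 0`), as in `PhiStar`. -/
noncomputable def empiricalFreq (p : ℕ → Prop) [DecidablePred p] (n : ℕ) : ℝ :=
  (#{k ∈ range (n + 1) | p k} : ℝ) / n

section empiricalFreq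

variable (p : ℕ → Prop) [DecidablePred p]

lemma empiricalFreq_le (n : ℕ) : empiricalFreq p n ≤ 1 + 1 / n :=
  calc empiricalFreq p n ≤ ((n : ℝ) + 1) / n := by
        refine div_le_div_of_nonneg_right ?_ n.cast_nonneg
        exact_mod_cast (card_filter_le _ _).trans (card_range _).le
    _ ≤ 1 + 1 / n := by rw [add_div]; gcongr; exact div_self_le_one _

lemma isBoundedUnder_le_empiricalFreq : IsBoundedUnder (· ≤ ·) atTop (empiricalFreq p) :=
  isBoundedUnder_of ⟨2, fun n => (empiricalFreq_le p n).trans (by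
    have : 1 / (n : ℝ) ≤ 1 := by simpa using Nat.cast_inv_le_one n
    linarith)⟩

lemma limsup_empiricalFreq_le_one : limsup (empiricalFreq p) atTop ≤ 1 := by
  have hbound : Tendsto (fun n : ℕ => 1 + 1 / (n : ℝ)) atTop (𝓝 1) := by
    simpa using tendsto_const_nhds.add (tendsto_one_div_atTop_nhds_zero_nat (𝕜 := ℝ))
  have hcobdd : IsCoboundedUnder (· ≤ ·) atTop (empiricalFreq p) :=
    (isBoundedUnder_of ⟨0, fun n => by unfold empiricalFreq; positivity⟩ :
      IsBoundedUnder (· ≥ ·) atTop (empiricalFreq p)).isCoboundedUnder_le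
  calc limsup (empiricalFreq p) atTop ≤ limsup (fun n : ℕ => 1 + 1 / (n : ℝ)) atTop :=
        limsup_le_limsup (Eventually.of_forall (empiricalFreq_le p)) hcobdd
          hbound.isBoundedUnder_le
    _ = 1 := hbound.limsup_eq

lemma one_sub_div_le_empiricalFreq {c m : ℕ} (hm : 0 < m) (h : ∀ k, c ≤ k → k < c + m → p k) :
    1 - (c : ℝ) / ((c + m : ℕ) : ℝ) ≤ empiricalFreq p (c + m) := by
  have hpos : (0 : ℝ) < ((c + m : ℕ) : ℝ) := by exact_mod_cast Nat.add_pos_right c hm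
  have hblock : Ico c (c + m) ⊆ {k ∈ range (c + m + 1) | p k} := fun k hk => by
    rw [mem_Ico] at hk
    exact mem_filter.2 ⟨mem_range.2 (by omega), h k hk.1 hk.2⟩
  have hcard : (m : ℝ) ≤ #{k ∈ range (c + m + 1) | p k} := by
    have := card_le_card hblock
    rw [Nat.card_Ico, Nat.add_sub_cancel_left] at this
    exact_mod_cast this
  calc 1 - (c : ℝ) / ((c + m : ℕ) : ℝ) = (m : ℝ) / ((c + m : ℕ) : ℝ) := by
        field_simp; push_cast; ring
    _ ≤ empiricalFreq p (c + m) := div_le_div_of_nonneg_right hcard hpos.le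

lemma one_le_limsup_empiricalFreq {c m : ℕ → ℕ} (hm : Tendsto m atTop atTop)
    (hc : Tendsto (fun l => (c l : ℝ) / ((c l + m l : ℕ) : ℝ)) atTop (𝓝 0))
    (hp : ∀ᶠ l in atTop, ∀ k, c l ≤ k → k < c l + m l → p k) :
    1 ≤ limsup (empiricalFreq p) atTop := by
  have hend : Tendsto (fun l => c l + m l) atTop atTop :=
    tendsto_atTop_mono (fun l => Nat.le_add_left _ _) hm
  have hratio : Tendsto (fun l => 1 - (c l : ℝ) / ((c l + m l : ℕ) : ℝ)) atTop (𝓝 1) := by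
    simpa using tendsto_const_nhds.sub hc
  refine le_of_forall_lt_imp_le_of_dense fun b hb => ?_
  refine le_limsup_of_frequently_le (hend.frequently (Eventually.frequently ?_))
    (isBoundedUnder_le_empiricalFreq p)
  filter_upwards [hp, hratio.eventually (eventually_gt_nhds hb), hm.eventually_gt_atTop 0]
    with l hpl hbl hml
  exact hbl.le.trans (one_sub_div_le_empiricalFreq p hml hpl)

lemma limsup_empiricalFreq_eq_one {c m : ℕ → ℕ} (hm : Tendsto m atTop atTop)
    (hc : Tendsto (fun l => (c l : ℝ) / ((c l + m l : ℕ) : ℝ)) atTop (𝓝 0))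
    (hp : ∀ᶠ l in atTop, ∀ k, c l ≤ k → k < c l + m l → p k) :
    limsup (empiricalFreq p) atTop = 1 :=
  (limsup_empiricalFreq_le_one p).antisymm (one_le_limsup_empiricalFreq p hm hc hp)

end empiricalFreq

lemma PhiStar_eq_limsup_empiricalFreq {α : Type*} (d : α → α → ℝ) (f : α → α) (x y : α) (δ : ℝ) :
    PhiStar d f x y δ = limsup (empiricalFreq fun k => d (f^[k] x) (f^[k] y) < δ) atTop :=
  rfl

lemma shift_iterate_apply (k : ℕ) (x : ℕ → Bool) (n : ℕ) : shift^[k] x n = x (n + k) := by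
  induction k generalizing n with
  | zero => rfl
  | succ k ih => rw [Function.iterate_succ_apply', shift, ih, Nat.add_right_comm, Nat.add_assoc]

lemma shiftDist_le_of_forall_lt_eq {x y : ℕ → Bool} {M : ℕ} (h : ∀ j < M, x j = y j) :
    shiftDist x y ≤ (2 : ℝ)⁻¹ ^ M := by
  unfold shiftDist
  split_ifs with hxy
  · positivity
  · have hne : {j | x j ≠ y j}.Nonempty := Function.ne_iff.mp hxy
    have hM : M ≤ sInf {j | x j ≠ y j} :=
      le_csInf hne fun j hj => not_lt.mp fun hjM => hj (h j hjM)
    exact pow_le_pow_of_le_one (by norm_num) (by norm_num) hM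

theorem stmt18_general (x y : ℕ → Bool) (c m : ℕ → ℕ)
    (hm : Filter.Tendsto m atTop atTop)
    (hc : Filter.Tendsto (fun l : ℕ => (c l : ℝ) / ((c l + m l : ℕ) : ℝ)) atTop (nhds 0))
    (hagree : ∀ M : ℕ, ∀ᶠ l in atTop, ∀ j, c l ≤ j → j < c l + m l + M → x j = y j) :
    ∀ δ : ℝ, 0 < δ → PhiStar shiftDist shift x y δ = 1 := by
  intro δ hδ
  obtain ⟨M, hM⟩ : ∃ M : ℕ, (2 : ℝ)⁻¹ ^ M < δ := exists_pow_lt_of_lt_one hδ (by norm_num)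
  rw [PhiStar_eq_limsup_empiricalFreq]
  refine limsup_empiricalFreq_eq_one _ hm hc ?_
  filter_upwards [hagree M] with l hl k hck hk
  refine (shiftDist_le_of_forall_lt_eq fun j hj => ?_).trans_lt hM
  rw [shift_iterate_apply, shift_iterate_apply]
  exact hl (j + k) (by omega) (by omega)

theorem stmt18 (x y : ℕ → Bool) (c m : ℕ → ℕ)
    (hdisj : ∀ l, c l + m l ≤ c (l+1))
    (hm : Filter.Tendsto m atTop atTop)
    (hc : Filter.Tendsto (fun l : ℕ => (c l : ℝ) / ((c l + m l : ℕ) : ℝ)) atTop (nhds 0))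
    (hagree : ∀ M : ℕ, ∀ᶠ l in atTop, ∀ j, c l ≤ j → j < c l + m l + M → x j = y j) :
    ∀ δ : ℝ, 0 < δ → PhiStar shiftDist shift x y δ = 1 :=
  stmt18_general x y c m hm hc hagree
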